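/- arXiv:2007.02404 — 2 statements merged into one kernel-verified Lean document; each statement's English description precedes it below -/
import Mathlib

section
/- Uniqueness of the constrained Tucker decomposition: suppose S ∈ ℝ^{I1×I2×I3} admits a Tucker decomposition S = F̃ ×1 Ã1 ×2 Ã2 ×3 Ã3 with Ãmᵀ Ãm = I_m · Id_{Rm} for each mode m, and suppose for each m the matrix Mm(S)·Mm(S)ᵀ has R_m distinct nonzero eigenvalues (and the rest zero). Then there exist matrices A1, A2, A3 and a core tensor F, unique up to simultaneous column sign changes, such that S = F ×1 A1 ×2 A2 ×3 A3, Amᵀ Am = I_m · Id_{Rm} for each m, and Mm(F)·Mm(F)ᵀ is diagonal with strictly decreasing positive diagonal entries for each m. -/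
open Matrix

noncomputable section

/-- Tucker product F ×₁ A1 ×₂ A2 ×₃ A3 of a core tensor with three loading matrices. -/
def tuck {I1 I2 I3 R1 R2 R3 : ℕ} (F : Fin R1 → Fin R2 → Fin R3 → ℝ)
    (A1 : Matrix (Fin I1) (Fin R1) ℝ) (A2 : Matrix (Fin I2) (Fin R2) ℝ)
    (A3 : Matrix (Fin I3) (Fin R3) ℝ) : Fin I1 → Fin I2 → Fin I3 → ℝ :=
  fun i1 i2 i3 => ∑ r1, ∑ r2, ∑ r3, A1 i1 r1 * A2 i2 r2 * A3 i3 r3 * F r1 r2 r3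

/-- Mode-1 matricization. -/
def mat1 {I1 I2 I3 : ℕ} (S : Fin I1 → Fin I2 → Fin I3 → ℝ) :
    Matrix (Fin I1) (Fin I2 × Fin I3) ℝ :=
  Matrix.of fun i p => S i p.1 p.2

/-- Mode-2 matricization. -/
def mat2 {I1 I2 I3 : ℕ} (S : Fin I1 → Fin I2 → Fin I3 → ℝ) :
    Matrix (Fin I2) (Fin I1 × Fin I3) ℝ :=
  Matrix.of fun i p => S p.1 i p.2

/-- Mode-3 matricization. -/
def mat3 {I1 I2 I3 : ℕ} (S : Fin I1 → Fin I2 → Fin I3 → ℝ) :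
    Matrix (Fin I3) (Fin I1 × Fin I2) ℝ :=
  Matrix.of fun i p => S p.1 p.2 i

/-- The symmetric PSD matrix `M` has exactly `R` distinct nonzero eigenvalues
(all positive, strictly decreasing) and the rest zero. -/
def distinctPosSpec {I : ℕ} (R : ℕ) (M : Matrix (Fin I) (Fin I) ℝ) : Prop :=
  ∃ (U : Matrix (Fin I) (Fin R) ℝ) (d : Fin R → ℝ),
    Uᵀ * U = 1 ∧ StrictAnti d ∧ (∀ j, 0 < d j) ∧
    M = U * Matrix.diagonal d * Uᵀ

/-- Each mode-m matricization Gram matrix of the core tensor is diagonal with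
strictly decreasing positive diagonal entries. -/
def coreDiag {R1 R2 R3 : ℕ} (F : Fin R1 → Fin R2 → Fin R3 → ℝ) : Prop :=
  (∃ d : Fin R1 → ℝ, StrictAnti d ∧ (∀ j, 0 < d j) ∧
      mat1 F * (mat1 F)ᵀ = Matrix.diagonal d) ∧
  (∃ d : Fin R2 → ℝ, StrictAnti d ∧ (∀ j, 0 < d j) ∧
      mat2 F * (mat2 F)ᵀ = Matrix.diagonal d) ∧
  (∃ d : Fin R3 → ℝ, StrictAnti d ∧ (∀ j, 0 < d j) ∧
      mat3 F * (mat3 F)ᵀ = Matrix.diagonal d)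

/-- A ±1 sign vector. -/
def isSign {R : ℕ} (s : Fin R → ℝ) : Prop := ∀ j, s j = 1 ∨ s j = -1

/-!
Write `Xₘ = Mₘ(S)`. If `S = F ×₁ A₁ ×₂ A₂ ×₃ A₃` with `AₘᵀAₘ = Iₘ • 1`, then
`X₁X₁ᵀ = I₂I₃ • A₁ (M₁(F)M₁(F)ᵀ) A₁ᵀ`, and likewise in the other modes. When `Mₘ(F)Mₘ(F)ᵀ` is
diagonal with strictly decreasing positive entries, this is a spectral decomposition of `XₘXₘᵀ`
with simple eigenvalues, so its orthonormal eigenbasis `Aₘ / √Iₘ` is determined up to column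
signs, and the core is recovered as `F = (I₁I₂I₃)⁻¹ • S ×₁ A₁ᵀ ×₂ A₂ᵀ ×₃ A₃ᵀ`. Conversely,
`Aₘ = √Iₘ • Uₘ` for the eigenvectors `Uₘ` of `XₘXₘᵀ`, with the core given by that formula, is
admissible, because each `UₘUₘᵀ` fixes the mode-`m` fibres of `S`. If some `Iₘ = 0`, then
`S = 0` and all ranks vanish.
-/

open scoped Kronecker

def IsDecreasingPosDiagonal {R : ℕ} (G : Matrix (Fin R) (Fin R) ℝ) : Prop :=
  ∃ d : Fin R → ℝ, StrictAnti d ∧ (∀ j, 0 < d j) ∧ G = diagonal d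

theorem isSign_one {R : ℕ} : isSign (1 : Fin R → ℝ) := fun _ => Or.inl rfl

theorem diagonal_mul_diagonal_self_of_isSign {R : ℕ} {s : Fin R → ℝ} (hs : isSign s) :
    diagonal s * diagonal s = 1 := by
  rw [diagonal_mul_diagonal, ← diagonal_one]
  congr 1
  funext j
  rcases hs j with h | h <;> simp [h]

section MatrixLemmas

variable {m n p q : Type*}

theorem transpose_smul_mul_smul [Fintype m] (c : ℝ) (A : Matrix m n ℝ) :
    (c • A)ᵀ * (c • A) = (c * c) • (Aᵀ * A) := by
  rw [transpose_smul, smul_mul, Matrix.mul_smul, smul_smul]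

theorem smul_mul_mul_transpose_smul [Fintype n] (c : ℝ) (A : Matrix m n ℝ) (D : Matrix n n ℝ) :
    (c • A) * D * (c • A)ᵀ = (c * c) • (A * D * Aᵀ) := by
  rw [transpose_smul, smul_mul, smul_mul, Matrix.mul_smul, smul_smul]

theorem transpose_mul_mul_mul_transpose_mul [Fintype m] [Fintype n] [DecidableEq n]
    {U : Matrix m n ℝ} (hU : Uᵀ * U = 1) (D : Matrix n n ℝ) : Uᵀ * (U * D * Uᵀ) * U = D := by
  simp only [← Matrix.mul_assoc, hU, Matrix.one_mul]
  rw [Matrix.mul_assoc, hU, Matrix.mul_one]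

theorem one_sub_mul_transpose_mul_eq_zero [Fintype m] [Fintype n] [DecidableEq m]
    [DecidableEq n] {U : Matrix m n ℝ} (hU : Uᵀ * U = 1) : (1 - U * Uᵀ) * U = 0 := by
  rw [Matrix.sub_mul, Matrix.one_mul, Matrix.mul_assoc, hU, Matrix.mul_one, sub_self]

theorem mul_transpose_mul_eq_self_of_mul_transpose_eq [Fintype m] [Fintype n] [Fintype p]
    [DecidableEq m] [DecidableEq n]
    {X : Matrix m p ℝ} {U : Matrix m n ℝ} {D : Matrix n n ℝ}
    (hU : Uᵀ * U = 1) (hX : X * Xᵀ = U * D * Uᵀ) : U * Uᵀ * X = X := by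
  have hQX : ((1 - U * Uᵀ) * X) * ((1 - U * Uᵀ) * X)ᵀ = 0 := by
    rw [transpose_mul, Matrix.mul_assoc, ← Matrix.mul_assoc X, hX]
    simp only [← Matrix.mul_assoc, one_sub_mul_transpose_mul_eq_zero hU, Matrix.zero_mul]
  have h0 : (1 - U * Uᵀ) * X = 0 := by
    rwa [← self_mul_conjTranspose_eq_zero, conjTranspose_eq_transpose_of_trivial]
  rw [Matrix.sub_mul, Matrix.one_mul, sub_eq_zero] at h0
  exact h0.symm

theorem exists_isSign_eq_diagonal_of_diagonal_mul_eq_mul_diagonal {R : ℕ}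
    {W : Matrix (Fin R) (Fin R) ℝ} {d e : Fin R → ℝ} (hW : Wᵀ * W = 1)
    (hd : StrictAnti d) (he : StrictAnti e) (h : diagonal d * W = W * diagonal e) :
    ∃ s : Fin R → ℝ, isSign s ∧ W = diagonal s := by
  have hentry : ∀ i j, W i j ≠ 0 → d i = e j := fun i j hij => by
    have := congrFun (congrFun h i) j
    rw [diagonal_mul, mul_diagonal, mul_comm] at this
    exact mul_left_cancel₀ hij this
  have hcol : ∀ j, ∃ i, W i j ≠ 0 := fun j => by
    by_contra! hj
    simpa [Matrix.mul_apply, hj] using congrFun (congrFun hW j) j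
  choose σ hσ using hcol
  -- `d ∘ σ = e` with both sequences strictly decreasing makes `σ` strictly monotone.
  have hσ_id : σ = id := StrictMono.eq_id fun j k hjk => by
    rw [← hd.lt_iff_gt, hentry _ _ (hσ j), hentry _ _ (hσ k)]
    exact he hjk
  have hoff : ∀ i j, i ≠ j → W i j = 0 := fun i j hij => by
    by_contra hne
    have hσj := hentry _ _ (hσ j)
    rw [hσ_id, id] at hσj
    exact hij (hd.injective ((hentry i j hne).trans hσj.symm))
  refine ⟨fun j => W j j, fun j => ?_, ?_⟩
  · have := congrFun (congrFun hW j) j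
    rw [Matrix.mul_apply, Finset.sum_eq_single j (fun i _ hij => by simp [hoff i j hij])
      (by simp)] at this
    simpa [mul_self_eq_one_iff] using this
  · ext i j
    by_cases hij : i = j
    · simp [hij]
    · simp [hij, hoff i j hij]

theorem exists_isSign_eq_mul_diagonal_of_spectral_eq [Fintype m] {R : ℕ} {U V : Matrix m (Fin R) ℝ} {d e : Fin R → ℝ} (hU : Uᵀ * U = 1) (hV : Vᵀ * V = 1)
    (hd : StrictAnti d) (he : StrictAnti e) (he0 : ∀ j, e j ≠ 0)
    (h : U * diagonal d * Uᵀ = V * diagonal e * Vᵀ) :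
    ∃ s : Fin R → ℝ, isSign s ∧ V = U * diagonal s := by
  classical
  have hQV : (1 - U * Uᵀ) * V * diagonal e = 0 := by
    calc (1 - U * Uᵀ) * V * diagonal e
        = (1 - U * Uᵀ) * (V * diagonal e * Vᵀ) * V := by
          simp only [Matrix.mul_assoc, hV, Matrix.mul_one]
      _ = 0 := by
          rw [← h]
          simp only [← Matrix.mul_assoc, one_sub_mul_transpose_mul_eq_zero hU, Matrix.zero_mul]
  have hPV : U * (Uᵀ * V) = V := by
    have h0 : (1 - U * Uᵀ) * V = 0 := by
      simpa [Matrix.mul_assoc, diagonal_mul_diagonal, he0] using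
        congrArg (· * diagonal e⁻¹) hQV
    rw [Matrix.sub_mul, Matrix.one_mul, sub_eq_zero] at h0
    rw [← Matrix.mul_assoc, ← h0]
  have hW : (Uᵀ * V)ᵀ * (Uᵀ * V) = 1 := by
    rw [transpose_mul, transpose_transpose, Matrix.mul_assoc, hPV, hV]
  have hdW : diagonal d * (Uᵀ * V) = (Uᵀ * V) * diagonal e := by
    calc diagonal d * (Uᵀ * V) = Uᵀ * (U * diagonal d * Uᵀ) * V := by
          simp only [← Matrix.mul_assoc, hU, Matrix.one_mul]
      _ = (Uᵀ * V) * diagonal e := by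
          rw [h]
          simp only [Matrix.mul_assoc, hV, Matrix.mul_one]
  obtain ⟨s, hs, hWs⟩ :=
    exists_isSign_eq_diagonal_of_diagonal_mul_eq_mul_diagonal hW hd he hdW
  exact ⟨s, hs, hWs ▸ hPV.symm⟩

theorem transpose_mul_self_inv_sqrt_smul [Fintype m] [DecidableEq n] {A : Matrix m n ℝ} {a : ℝ}
    (hA : Aᵀ * A = a • 1) (ha : 0 < a) : ((√a)⁻¹ • A)ᵀ * ((√a)⁻¹ • A) = 1 := by
  rw [transpose_smul_mul_smul, hA, smul_smul, ← mul_inv, Real.mul_self_sqrt ha.le,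
    inv_mul_cancel₀ ha.ne', one_smul]

theorem exists_isSign_eq_mul_diagonal_of_gram_eq [Fintype m] {R : ℕ} {A A' : Matrix m (Fin R) ℝ} {G G' : Matrix (Fin R) (Fin R) ℝ} {a : ℝ}
    (hA : Aᵀ * A = a • 1) (hA' : A'ᵀ * A' = a • 1) (ha : 0 < a)
    (hG : IsDecreasingPosDiagonal G) (hG' : IsDecreasingPosDiagonal G')
    (h : A * G * Aᵀ = A' * G' * A'ᵀ) :
    ∃ s : Fin R → ℝ, isSign s ∧ A' = A * diagonal s := by
  obtain ⟨d, hd, -, rfl⟩ := hG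
  obtain ⟨d', hd', hd'0, rfl⟩ := hG'
  have hsqrt : √a ≠ 0 := (Real.sqrt_pos.mpr ha).ne'
  obtain ⟨s, hs, hVs⟩ := exists_isSign_eq_mul_diagonal_of_spectral_eq
    (transpose_mul_self_inv_sqrt_smul hA ha) (transpose_mul_self_inv_sqrt_smul hA' ha) hd hd'
    (fun j => (hd'0 j).ne') (by rw [smul_mul_mul_transpose_smul, smul_mul_mul_transpose_smul, h])
  refine ⟨s, hs, ?_⟩
  rwa [smul_mul, inv_smul_eq_iff₀ hsqrt, smul_inv_smul₀ hsqrt] at hVs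

theorem isDecreasingPosDiagonal_of_spectral_eq [Fintype m] {R : ℕ}
    {U : Matrix m (Fin R) ℝ} {d : Fin R → ℝ} {G : Matrix (Fin R) (Fin R) ℝ} {c : ℝ}
    (hU : Uᵀ * U = 1) (hd : StrictAnti d) (hd0 : ∀ j, 0 < d j) (hc : 0 < c)
    (h : U * diagonal d * Uᵀ = c • (U * G * Uᵀ)) : IsDecreasingPosDiagonal G := by
  have hG : G = diagonal (c⁻¹ • d) := by
    have := congrArg (fun M => c⁻¹ • (Uᵀ * M * U)) h
    simp only [Matrix.mul_smul, Matrix.smul_mul, transpose_mul_mul_mul_transpose_mul hU,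
      smul_smul, inv_mul_cancel₀ hc.ne', one_smul] at this
    rw [← this, diagonal_smul]
  exact ⟨c⁻¹ • d, hd.const_mul (inv_pos.mpr hc), fun j => mul_pos (inv_pos.mpr hc) (hd0 j), hG⟩

theorem kronecker_transpose_mul_self [Fintype m] [Fintype n] [DecidableEq p]
    [DecidableEq q] {A : Matrix m p ℝ} {B : Matrix n q ℝ} {a b : ℝ}
    (hA : Aᵀ * A = a • 1) (hB : Bᵀ * B = b • 1) : (A ⊗ₖ B)ᵀ * (A ⊗ₖ B) = (a * b) • 1 := by
  rw [← kroneckerMap_transpose, ← mul_kronecker_mul, hA, hB, smul_kronecker, kronecker_smul,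
    one_kronecker_one, smul_smul]

theorem mul_mul_transpose_mul_transpose_self [Fintype n] [Fintype p]
    [Fintype q] [DecidableEq p] (A : Matrix m n ℝ) (M : Matrix n p ℝ) {K : Matrix q p ℝ} {b : ℝ}
    (hK : Kᵀ * K = b • 1) : (A * M * Kᵀ) * (A * M * Kᵀ)ᵀ = b • (A * (M * Mᵀ) * Aᵀ) := by
  calc (A * M * Kᵀ) * (A * M * Kᵀ)ᵀ = A * M * (Kᵀ * K) * Mᵀ * Aᵀ := by
        simp only [transpose_mul, transpose_transpose, Matrix.mul_assoc]
    _ = b • (A * (M * Mᵀ) * Aᵀ) := by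
        rw [hK, Matrix.mul_smul, Matrix.mul_one, Matrix.smul_mul, Matrix.smul_mul,
          Matrix.mul_assoc A M]

theorem mul_mul_transpose_injective [Fintype m] [Fintype n] [Fintype p]
    [Fintype q] [DecidableEq n] [DecidableEq p] {A : Matrix m n ℝ} {K : Matrix q p ℝ} {a b : ℝ}
    (hA : Aᵀ * A = a • 1) (hK : Kᵀ * K = b • 1) (hab : a * b ≠ 0) :
    Function.Injective fun M : Matrix n p ℝ => A * M * Kᵀ := by
  intro M N hMN
  have hrecover : ∀ M : Matrix n p ℝ, Aᵀ * (A * M * Kᵀ) * K = (a * b) • M := fun M => by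
    simp only [← Matrix.mul_assoc, hA, Matrix.smul_mul, Matrix.one_mul]
    rw [Matrix.mul_assoc, hK, Matrix.mul_smul, Matrix.mul_one, smul_smul]
  apply smul_right_injective _ hab
  simp only at hMN ⊢
  rw [← hrecover, ← hrecover, hMN]

end MatrixLemmas

section Tucker

variable {I1 I2 I3 R1 R2 R3 : ℕ}

theorem mat1_injective : Function.Injective (mat1 : (Fin I1 → Fin I2 → Fin I3 → ℝ) → _) :=
  fun _ _ h => funext fun i => funext fun j => funext fun k => congrFun (congrFun h i) (j, k)

theorem mat2_injective : Function.Injective (mat2 : (Fin I1 → Fin I2 → Fin I3 → ℝ) → _) :=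
  fun _ _ h => funext fun i => funext fun j => funext fun k => congrFun (congrFun h j) (i, k)

theorem mat3_injective : Function.Injective (mat3 : (Fin I1 → Fin I2 → Fin I3 → ℝ) → _) :=
  fun _ _ h => funext fun i => funext fun j => funext fun k => congrFun (congrFun h k) (i, j)

theorem mat1_tuck (F : Fin R1 → Fin R2 → Fin R3 → ℝ) (A1 : Matrix (Fin I1) (Fin R1) ℝ)
    (A2 : Matrix (Fin I2) (Fin R2) ℝ) (A3 : Matrix (Fin I3) (Fin R3) ℝ) :
    mat1 (tuck F A1 A2 A3) = A1 * mat1 F * (A2 ⊗ₖ A3)ᵀ := by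
  ext i ⟨i2, i3⟩
  simp only [mat1, tuck, of_apply, mul_apply, transpose_apply, kroneckerMap_apply,
    Fintype.sum_prod_type, Finset.sum_mul]
  rw [Finset.sum_comm]
  refine Finset.sum_congr rfl fun r2 _ => ?_
  rw [Finset.sum_comm]
  exact Finset.sum_congr rfl fun r3 _ => Finset.sum_congr rfl fun r1 _ => by ring

theorem mat2_tuck (F : Fin R1 → Fin R2 → Fin R3 → ℝ) (A1 : Matrix (Fin I1) (Fin R1) ℝ)
    (A2 : Matrix (Fin I2) (Fin R2) ℝ) (A3 : Matrix (Fin I3) (Fin R3) ℝ) :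
    mat2 (tuck F A1 A2 A3) = A2 * mat2 F * (A1 ⊗ₖ A3)ᵀ := by
  ext i ⟨i1, i3⟩
  simp only [mat2, tuck, of_apply, mul_apply, transpose_apply, kroneckerMap_apply,
    Fintype.sum_prod_type, Finset.sum_mul]
  refine Finset.sum_congr rfl fun r1 _ => ?_
  rw [Finset.sum_comm]
  exact Finset.sum_congr rfl fun r3 _ => Finset.sum_congr rfl fun r2 _ => by ring

theorem mat3_tuck (F : Fin R1 → Fin R2 → Fin R3 → ℝ) (A1 : Matrix (Fin I1) (Fin R1) ℝ)
    (A2 : Matrix (Fin I2) (Fin R2) ℝ) (A3 : Matrix (Fin I3) (Fin R3) ℝ) :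
    mat3 (tuck F A1 A2 A3) = A3 * mat3 F * (A1 ⊗ₖ A2)ᵀ := by
  ext i ⟨i1, i2⟩
  simp only [mat3, tuck, of_apply, mul_apply, transpose_apply, kroneckerMap_apply,
    Fintype.sum_prod_type, Finset.sum_mul]
  exact Finset.sum_congr rfl fun r1 _ => Finset.sum_congr rfl fun r2 _ =>
    Finset.sum_congr rfl fun r3 _ => by ring

theorem tuck_tuck {J1 J2 J3 : ℕ} (F : Fin R1 → Fin R2 → Fin R3 → ℝ)
    (B1 : Matrix (Fin J1) (Fin R1) ℝ) (B2 : Matrix (Fin J2) (Fin R2) ℝ)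
    (B3 : Matrix (Fin J3) (Fin R3) ℝ) (A1 : Matrix (Fin I1) (Fin J1) ℝ)
    (A2 : Matrix (Fin I2) (Fin J2) ℝ) (A3 : Matrix (Fin I3) (Fin J3) ℝ) :
    tuck (tuck F B1 B2 B3) A1 A2 A3 = tuck F (A1 * B1) (A2 * B2) (A3 * B3) := by
  apply mat1_injective
  rw [mat1_tuck, mat1_tuck, mat1_tuck, mul_kronecker_mul, transpose_mul]
  simp only [Matrix.mul_assoc]

theorem tuck_eq_self_of_mul_mat (S : Fin I1 → Fin I2 → Fin I3 → ℝ)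
    {P1 : Matrix (Fin I1) (Fin I1) ℝ} {P2 : Matrix (Fin I2) (Fin I2) ℝ}
    {P3 : Matrix (Fin I3) (Fin I3) ℝ} (h1 : P1 * mat1 S = mat1 S) (h2 : P2 * mat2 S = mat2 S)
    (h3 : P3 * mat3 S = mat3 S) : tuck S P1 P2 P3 = S := by
  have e1 : tuck S P1 1 1 = S := mat1_injective <| by
    rw [mat1_tuck, one_kronecker_one, transpose_one, Matrix.mul_one, h1]
  have e2 : tuck S 1 P2 1 = S := mat2_injective <| by
    rw [mat2_tuck, one_kronecker_one, transpose_one, Matrix.mul_one, h2]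
  have e3 : tuck S 1 1 P3 = S := mat3_injective <| by
    rw [mat3_tuck, one_kronecker_one, transpose_one, Matrix.mul_one, h3]
  calc tuck S P1 P2 P3 = tuck (tuck S 1 1 P3) P1 P2 1 := by
        rw [tuck_tuck, Matrix.mul_one, Matrix.mul_one, Matrix.one_mul]
    _ = tuck (tuck S 1 P2 1) P1 1 1 := by
        rw [e3, tuck_tuck, Matrix.mul_one, Matrix.mul_one, Matrix.one_mul]
    _ = S := by rw [e2, e1]

theorem tuck_left_injective {A1 : Matrix (Fin I1) (Fin R1) ℝ} {A2 : Matrix (Fin I2) (Fin R2) ℝ}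
    {A3 : Matrix (Fin I3) (Fin R3) ℝ} {a1 a2 a3 : ℝ} (hA1 : A1ᵀ * A1 = a1 • 1)
    (hA2 : A2ᵀ * A2 = a2 • 1) (hA3 : A3ᵀ * A3 = a3 • 1) (ha : a1 * (a2 * a3) ≠ 0) :
    Function.Injective fun F : Fin R1 → Fin R2 → Fin R3 → ℝ => tuck F A1 A2 A3 := by
  intro F G h
  apply mat1_injective
  apply mul_mul_transpose_injective hA1 (kronecker_transpose_mul_self hA2 hA3) ha
  simpa only [mat1_tuck] using congrArg mat1 h

theorem mat1_tuck_mul_transpose (F : Fin R1 → Fin R2 → Fin R3 → ℝ)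
    (A1 : Matrix (Fin I1) (Fin R1) ℝ) {A2 : Matrix (Fin I2) (Fin R2) ℝ}
    {A3 : Matrix (Fin I3) (Fin R3) ℝ} {a2 a3 : ℝ} (hA2 : A2ᵀ * A2 = a2 • 1)
    (hA3 : A3ᵀ * A3 = a3 • 1) :
    mat1 (tuck F A1 A2 A3) * (mat1 (tuck F A1 A2 A3))ᵀ
      = (a2 * a3) • (A1 * (mat1 F * (mat1 F)ᵀ) * A1ᵀ) := by
  rw [mat1_tuck]
  exact mul_mul_transpose_mul_transpose_self _ _ (kronecker_transpose_mul_self hA2 hA3)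

theorem mat2_tuck_mul_transpose (F : Fin R1 → Fin R2 → Fin R3 → ℝ)
    {A1 : Matrix (Fin I1) (Fin R1) ℝ} (A2 : Matrix (Fin I2) (Fin R2) ℝ)
    {A3 : Matrix (Fin I3) (Fin R3) ℝ} {a1 a3 : ℝ} (hA1 : A1ᵀ * A1 = a1 • 1)
    (hA3 : A3ᵀ * A3 = a3 • 1) :
    mat2 (tuck F A1 A2 A3) * (mat2 (tuck F A1 A2 A3))ᵀ
      = (a1 * a3) • (A2 * (mat2 F * (mat2 F)ᵀ) * A2ᵀ) := by
  rw [mat2_tuck]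
  exact mul_mul_transpose_mul_transpose_self _ _ (kronecker_transpose_mul_self hA1 hA3)

theorem mat3_tuck_mul_transpose (F : Fin R1 → Fin R2 → Fin R3 → ℝ)
    {A1 : Matrix (Fin I1) (Fin R1) ℝ} {A2 : Matrix (Fin I2) (Fin R2) ℝ}
    (A3 : Matrix (Fin I3) (Fin R3) ℝ) {a1 a2 : ℝ} (hA1 : A1ᵀ * A1 = a1 • 1)
    (hA2 : A2ᵀ * A2 = a2 • 1) :
    mat3 (tuck F A1 A2 A3) * (mat3 (tuck F A1 A2 A3))ᵀ
      = (a1 * a2) • (A3 * (mat3 F * (mat3 F)ᵀ) * A3ᵀ) := by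
  rw [mat3_tuck]
  exact mul_mul_transpose_mul_transpose_self _ _ (kronecker_transpose_mul_self hA1 hA2)

end Tucker

theorem eq_zero_of_distinctPosSpec_mul_transpose {I R : ℕ} {J : Type*} [Fintype J]
    {X : Matrix (Fin I) J ℝ} (h : distinctPosSpec R (X * Xᵀ)) (hX : X = 0) : R = 0 := by
  obtain ⟨U, d, hU, -, hd0, hXU⟩ := h
  have hd : diagonal d = 0 := by
    rw [← transpose_mul_mul_mul_transpose_mul hU (diagonal d), ← hXU, hX, Matrix.zero_mul,
      Matrix.mul_zero, Matrix.zero_mul]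
  by_contra hR
  have j : Fin R := ⟨0, Nat.pos_of_ne_zero hR⟩
  exact (hd0 j).ne' (by simpa using congrFun (congrFun hd j) j)

theorem isDecreasingPosDiagonal_of_isEmpty (G : Matrix (Fin 0) (Fin 0) ℝ) :
    IsDecreasingPosDiagonal G :=
  ⟨0, fun a => a.elim0, fun j => j.elim0, Subsingleton.elim _ _⟩

theorem exists_loading_of_distinctPosSpec {I R : ℕ} {J : Type*} [Fintype J]
    {X : Matrix (Fin I) J ℝ} (hI : 0 < I) (hX : distinctPosSpec R (X * Xᵀ)) :
    ∃ A : Matrix (Fin I) (Fin R) ℝ, Aᵀ * A = (I : ℝ) • 1 ∧ A * ((I : ℝ)⁻¹ • Aᵀ) * X = X ∧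
      ∀ (G : Matrix (Fin R) (Fin R) ℝ) (c : ℝ), 0 < c → X * Xᵀ = c • (A * G * Aᵀ) →
        IsDecreasingPosDiagonal G := by
  obtain ⟨U, d, hU, hd, hd0, hXU⟩ := hX
  have hI' : (0 : ℝ) < I := Nat.cast_pos.mpr hI
  refine ⟨√I • U, ?_, ?_, fun G c hc h => ?_⟩
  · rw [transpose_smul_mul_smul, Real.mul_self_sqrt hI'.le, hU]
  · have hP : √I • U * ((I : ℝ)⁻¹ • (√I • U)ᵀ) = U * Uᵀ := by
      rw [transpose_smul, smul_smul, smul_mul, Matrix.mul_smul, smul_smul, ← mul_assoc,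
        mul_right_comm, Real.mul_self_sqrt hI'.le, mul_inv_cancel₀ hI'.ne', one_smul]
    rw [hP]
    exact mul_transpose_mul_eq_self_of_mul_transpose_eq hU hXU
  · refine isDecreasingPosDiagonal_of_spectral_eq hU hd hd0 (mul_pos hc hI') ?_
    rw [← hXU, h, smul_mul_mul_transpose_smul, Real.mul_self_sqrt hI'.le, smul_smul]

section Identification

variable {I1 I2 I3 R1 R2 R3 : ℕ}

def IsIdentifiedTucker (S : Fin I1 → Fin I2 → Fin I3 → ℝ) (F : Fin R1 → Fin R2 → Fin R3 → ℝ)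
    (A1 : Matrix (Fin I1) (Fin R1) ℝ) (A2 : Matrix (Fin I2) (Fin R2) ℝ)
    (A3 : Matrix (Fin I3) (Fin R3) ℝ) : Prop :=
  S = tuck F A1 A2 A3 ∧ A1ᵀ * A1 = (I1 : ℝ) • 1 ∧ A2ᵀ * A2 = (I2 : ℝ) • 1 ∧
    A3ᵀ * A3 = (I3 : ℝ) • 1 ∧ coreDiag F

theorem exists_isIdentifiedTucker (S : Fin I1 → Fin I2 → Fin I3 → ℝ) (hI1 : 0 < I1)
    (hI2 : 0 < I2) (hI3 : 0 < I3) (hs1 : distinctPosSpec R1 (mat1 S * (mat1 S)ᵀ))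
    (hs2 : distinctPosSpec R2 (mat2 S * (mat2 S)ᵀ))
    (hs3 : distinctPosSpec R3 (mat3 S * (mat3 S)ᵀ)) :
    ∃ (F : Fin R1 → Fin R2 → Fin R3 → ℝ) (A1 : Matrix (Fin I1) (Fin R1) ℝ)
      (A2 : Matrix (Fin I2) (Fin R2) ℝ) (A3 : Matrix (Fin I3) (Fin R3) ℝ),
      IsIdentifiedTucker S F A1 A2 A3 := by
  obtain ⟨A1, hA1, hP1, hG1⟩ := exists_loading_of_distinctPosSpec hI1 hs1
  obtain ⟨A2, hA2, hP2, hG2⟩ := exists_loading_of_distinctPosSpec hI2 hs2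
  obtain ⟨A3, hA3, hP3, hG3⟩ := exists_loading_of_distinctPosSpec hI3 hs3
  obtain ⟨F, rfl⟩ : ∃ F, S = tuck F A1 A2 A3 :=
    ⟨tuck S ((I1 : ℝ)⁻¹ • A1ᵀ) ((I2 : ℝ)⁻¹ • A2ᵀ) ((I3 : ℝ)⁻¹ • A3ᵀ),
      by rw [tuck_tuck, tuck_eq_self_of_mul_mat S hP1 hP2 hP3]⟩
  have h1 : (0 : ℝ) < I1 := Nat.cast_pos.mpr hI1
  have h2 : (0 : ℝ) < I2 := Nat.cast_pos.mpr hI2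
  have h3 : (0 : ℝ) < I3 := Nat.cast_pos.mpr hI3
  exact ⟨F, A1, A2, A3, rfl, hA1, hA2, hA3,
    hG1 _ _ (mul_pos h2 h3) (mat1_tuck_mul_transpose F A1 hA2 hA3),
    hG2 _ _ (mul_pos h1 h3) (mat2_tuck_mul_transpose F A2 hA1 hA3),
    hG3 _ _ (mul_pos h1 h2) (mat3_tuck_mul_transpose F A3 hA1 hA2)⟩

theorem IsIdentifiedTucker.exists_isSign {S : Fin I1 → Fin I2 → Fin I3 → ℝ}
    {F F' : Fin R1 → Fin R2 → Fin R3 → ℝ} {A1 A1' : Matrix (Fin I1) (Fin R1) ℝ}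
    {A2 A2' : Matrix (Fin I2) (Fin R2) ℝ} {A3 A3' : Matrix (Fin I3) (Fin R3) ℝ}
    (hI1 : 0 < I1) (hI2 : 0 < I2) (hI3 : 0 < I3) (h : IsIdentifiedTucker S F A1 A2 A3)
    (h' : IsIdentifiedTucker S F' A1' A2' A3') :
    ∃ (s1 : Fin R1 → ℝ) (s2 : Fin R2 → ℝ) (s3 : Fin R3 → ℝ),
      isSign s1 ∧ isSign s2 ∧ isSign s3 ∧
      A1' = A1 * diagonal s1 ∧ A2' = A2 * diagonal s2 ∧ A3' = A3 * diagonal s3 ∧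
      F' = tuck F (diagonal s1) (diagonal s2) (diagonal s3) := by
  obtain ⟨rfl, hA1, hA2, hA3, hG1, hG2, hG3⟩ := h
  obtain ⟨hS, hA1', hA2', hA3', hG1', hG2', hG3'⟩ := h'
  have h1 : (0 : ℝ) < I1 := Nat.cast_pos.mpr hI1
  have h2 : (0 : ℝ) < I2 := Nat.cast_pos.mpr hI2
  have h3 : (0 : ℝ) < I3 := Nat.cast_pos.mpr hI3
  have hgram1 := (mat1_tuck_mul_transpose F A1 hA2 hA3).symm.trans
    (hS ▸ mat1_tuck_mul_transpose F' A1' hA2' hA3')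
  have hgram2 := (mat2_tuck_mul_transpose F A2 hA1 hA3).symm.trans
    (hS ▸ mat2_tuck_mul_transpose F' A2' hA1' hA3')
  have hgram3 := (mat3_tuck_mul_transpose F A3 hA1 hA2).symm.trans
    (hS ▸ mat3_tuck_mul_transpose F' A3' hA1' hA2')
  obtain ⟨s1, hs1, rfl⟩ := exists_isSign_eq_mul_diagonal_of_gram_eq hA1 hA1' h1 hG1 hG1'
    (smul_right_injective _ (mul_pos h2 h3).ne' hgram1)
  obtain ⟨s2, hs2, rfl⟩ := exists_isSign_eq_mul_diagonal_of_gram_eq hA2 hA2' h2 hG2 hG2'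
    (smul_right_injective _ (mul_pos h1 h3).ne' hgram2)
  obtain ⟨s3, hs3, rfl⟩ := exists_isSign_eq_mul_diagonal_of_gram_eq hA3 hA3' h3 hG3 hG3'
    (smul_right_injective _ (mul_pos h1 h2).ne' hgram3)
  refine ⟨s1, s2, s3, hs1, hs2, hs3, rfl, rfl, rfl,
    tuck_left_injective hA1' hA2' hA3' (mul_pos h1 (mul_pos h2 h3)).ne' ?_⟩
  simp only [tuck_tuck, ← hS, Matrix.mul_assoc, diagonal_mul_diagonal_self_of_isSign hs1,
    diagonal_mul_diagonal_self_of_isSign hs2, diagonal_mul_diagonal_self_of_isSign hs3,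
    Matrix.mul_one]

theorem isIdentifiedTucker_zero :
    IsIdentifiedTucker (0 : Fin I1 → Fin I2 → Fin I3 → ℝ) (0 : Fin 0 → Fin 0 → Fin 0 → ℝ) 0 0 0 :=
  ⟨by funext i j k; simp [tuck], Subsingleton.elim _ _, Subsingleton.elim _ _,
    Subsingleton.elim _ _, isDecreasingPosDiagonal_of_isEmpty _,
    isDecreasingPosDiagonal_of_isEmpty _, isDecreasingPosDiagonal_of_isEmpty _⟩

end Identification

theorem tucker_identification_unique_general {I1 I2 I3 R1 R2 R3 : ℕ}
    (S : Fin I1 → Fin I2 → Fin I3 → ℝ)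
    (hs1 : distinctPosSpec R1 (mat1 S * (mat1 S)ᵀ))
    (hs2 : distinctPosSpec R2 (mat2 S * (mat2 S)ᵀ))
    (hs3 : distinctPosSpec R3 (mat3 S * (mat3 S)ᵀ)) :
    ∃ (F : Fin R1 → Fin R2 → Fin R3 → ℝ)
      (A1 : Matrix (Fin I1) (Fin R1) ℝ) (A2 : Matrix (Fin I2) (Fin R2) ℝ)
      (A3 : Matrix (Fin I3) (Fin R3) ℝ),
      (S = tuck F A1 A2 A3 ∧
        A1ᵀ * A1 = (I1 : ℝ) • 1 ∧ A2ᵀ * A2 = (I2 : ℝ) • 1 ∧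
        A3ᵀ * A3 = (I3 : ℝ) • 1 ∧ coreDiag F) ∧
      (∀ (F' : Fin R1 → Fin R2 → Fin R3 → ℝ)
        (A1' : Matrix (Fin I1) (Fin R1) ℝ) (A2' : Matrix (Fin I2) (Fin R2) ℝ)
        (A3' : Matrix (Fin I3) (Fin R3) ℝ),
        (S = tuck F' A1' A2' A3' ∧
          A1'ᵀ * A1' = (I1 : ℝ) • 1 ∧ A2'ᵀ * A2' = (I2 : ℝ) • 1 ∧
          A3'ᵀ * A3' = (I3 : ℝ) • 1 ∧ coreDiag F') →
        ∃ (s1 : Fin R1 → ℝ) (s2 : Fin R2 → ℝ) (s3 : Fin R3 → ℝ),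
          isSign s1 ∧ isSign s2 ∧ isSign s3 ∧
          A1' = A1 * Matrix.diagonal s1 ∧
          A2' = A2 * Matrix.diagonal s2 ∧
          A3' = A3 * Matrix.diagonal s3 ∧
          F' = tuck F (Matrix.diagonal s1) (Matrix.diagonal s2) (Matrix.diagonal s3)) := by
  by_cases hI : 0 < I1 ∧ 0 < I2 ∧ 0 < I3
  · obtain ⟨hI1, hI2, hI3⟩ := hI
    obtain ⟨F, A1, A2, A3, h⟩ := exists_isIdentifiedTucker S hI1 hI2 hI3 hs1 hs2 hs3
    exact ⟨F, A1, A2, A3, h, fun F' A1' A2' A3' h' => h.exists_isSign hI1 hI2 hI3 h'⟩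
  · obtain rfl : S = 0 := funext fun i => funext fun j => funext fun k =>
      absurd ⟨i.pos, j.pos, k.pos⟩ hI
    obtain rfl := eq_zero_of_distinctPosSpec_mul_transpose hs1 rfl
    obtain rfl := eq_zero_of_distinctPosSpec_mul_transpose hs2 rfl
    obtain rfl := eq_zero_of_distinctPosSpec_mul_transpose hs3 rfl
    exact ⟨0, 0, 0, 0, isIdentifiedTucker_zero, fun _ _ _ _ _ => ⟨1, 1, 1, isSign_one,
      isSign_one, isSign_one, Subsingleton.elim _ _, Subsingleton.elim _ _,
      Subsingleton.elim _ _, Subsingleton.elim _ _⟩⟩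

/-- Uniqueness (up to column signs) of the Tucker decomposition satisfying the
identification conditions. -/
theorem tucker_identification_unique {I1 I2 I3 R1 R2 R3 : ℕ}
    (S : Fin I1 → Fin I2 → Fin I3 → ℝ)
    (Ft : Fin R1 → Fin R2 → Fin R3 → ℝ)
    (At1 : Matrix (Fin I1) (Fin R1) ℝ) (At2 : Matrix (Fin I2) (Fin R2) ℝ)
    (At3 : Matrix (Fin I3) (Fin R3) ℝ)
    (hdec : S = tuck Ft At1 At2 At3)
    (ho1 : At1ᵀ * At1 = (I1 : ℝ) • 1) (ho2 : At2ᵀ * At2 = (I2 : ℝ) • 1)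
    (ho3 : At3ᵀ * At3 = (I3 : ℝ) • 1)
    (hs1 : distinctPosSpec R1 (mat1 S * (mat1 S)ᵀ))
    (hs2 : distinctPosSpec R2 (mat2 S * (mat2 S)ᵀ))
    (hs3 : distinctPosSpec R3 (mat3 S * (mat3 S)ᵀ)) :
    ∃ (F : Fin R1 → Fin R2 → Fin R3 → ℝ)
      (A1 : Matrix (Fin I1) (Fin R1) ℝ) (A2 : Matrix (Fin I2) (Fin R2) ℝ)
      (A3 : Matrix (Fin I3) (Fin R3) ℝ),
      (S = tuck F A1 A2 A3 ∧
        A1ᵀ * A1 = (I1 : ℝ) • 1 ∧ A2ᵀ * A2 = (I2 : ℝ) • 1 ∧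
        A3ᵀ * A3 = (I3 : ℝ) • 1 ∧ coreDiag F) ∧
      (∀ (F' : Fin R1 → Fin R2 → Fin R3 → ℝ)
        (A1' : Matrix (Fin I1) (Fin R1) ℝ) (A2' : Matrix (Fin I2) (Fin R2) ℝ)
        (A3' : Matrix (Fin I3) (Fin R3) ℝ),
        (S = tuck F' A1' A2' A3' ∧
          A1'ᵀ * A1' = (I1 : ℝ) • 1 ∧ A2'ᵀ * A2' = (I2 : ℝ) • 1 ∧
          A3'ᵀ * A3' = (I3 : ℝ) • 1 ∧ coreDiag F') →
        ∃ (s1 : Fin R1 → ℝ) (s2 : Fin R2 → ℝ) (s3 : Fin R3 → ℝ),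
          isSign s1 ∧ isSign s2 ∧ isSign s3 ∧
          A1' = A1 * Matrix.diagonal s1 ∧
          A2' = A2 * Matrix.diagonal s2 ∧
          A3' = A3 * Matrix.diagonal s3 ∧
          F' = tuck F (Matrix.diagonal s1) (Matrix.diagonal s2) (Matrix.diagonal s3)) :=
  tucker_identification_unique_general S hs1 hs2 hs3
end
end

section
/- Near-orthogonality of the cross-Gram matrix: let U, Ũ ∈ ℝ^{I×R} have orthonormal columns. Then ‖(UᵀŨ)(UᵀŨ)ᵀ − Id_R‖_F ≤ ‖ŨŨᵀ − UUᵀ‖_F. Consequently there exists an orthogonal matrix O ∈ O(R) with ‖UᵀŨ − O‖_F ≤ ‖ŨŨᵀ − UUᵀ‖_F. -/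
/-!
Conjugating `ŨŨᵀ - UUᵀ` by `U` gives `(UᵀŨ)(UᵀŨ)ᵀ - 1`, and multiplying by a matrix with
orthonormal columns, or by its transpose, does not increase the Frobenius norm. For the orthogonal
factor, take a singular value decomposition `UᵀŨ = P diag(s) Qᵀ` and `O = PQᵀ`: orthogonal
changes of basis turn `UᵀŨ - O` and `(UᵀŨ)(UᵀŨ)ᵀ - 1` into the diagonal matrices with entries
`sᵢ - 1` and `sᵢ² - 1`, and `|s - 1| ≤ |s² - 1|` for `s ≥ 0`.
-/

open Matrix

noncomputable section

/-- Frobenius norm of a real matrix. -/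
def frob {m n : ℕ} (A : Matrix (Fin m) (Fin n) ℝ) : ℝ :=
  Real.sqrt (∑ i, ∑ j, (A i j) ^ 2)

theorem sub_one_sq_le_sq_sub_one_sq {x : ℝ} (hx : 0 ≤ x) : (x - 1) ^ 2 ≤ (x ^ 2 - 1) ^ 2 := by
  have hgap : (x ^ 2 - 1) ^ 2 - (x - 1) ^ 2 = (x - 1) ^ 2 * (x * (x + 2)) := by ring
  have : 0 ≤ (x - 1) ^ 2 * (x * (x + 2)) := by positivity
  linarith

namespace Matrix

variable {l m n r : Type*} [Fintype l] [Fintype m] [Fintype n] [Fintype r]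

def frobSq (A : Matrix m n ℝ) : ℝ := ∑ i, ∑ j, A i j ^ 2

theorem frobSq_nonneg (A : Matrix m n ℝ) : 0 ≤ A.frobSq := by
  unfold frobSq; positivity

theorem frobSq_eq_trace (A : Matrix m n ℝ) : A.frobSq = trace (Aᵀ * A) := by
  simp only [frobSq, trace, diag, mul_apply, transpose_apply, sq]
  exact Finset.sum_comm

theorem frobSq_transpose (A : Matrix m n ℝ) : Aᵀ.frobSq = A.frobSq :=
  Finset.sum_comm

theorem frobSq_mul_eq_of_orthonormal [DecidableEq r] {U : Matrix m r ℝ} (hU : Uᵀ * U = 1)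
    (X : Matrix r n ℝ) : (U * X).frobSq = X.frobSq := by
  rw [frobSq_eq_trace, frobSq_eq_trace, transpose_mul, Matrix.mul_assoc, ← Matrix.mul_assoc Uᵀ,
    hU, Matrix.one_mul]

theorem frobSq_mul_transpose_eq_of_orthonormal [DecidableEq r] {Q : Matrix n r ℝ}
    (hQ : Qᵀ * Q = 1) (X : Matrix l r ℝ) : (X * Qᵀ).frobSq = X.frobSq := by
  rw [← frobSq_transpose, transpose_mul, transpose_transpose, frobSq_mul_eq_of_orthonormal hQ,
    frobSq_transpose]

theorem frobSq_transpose_mul_le_of_orthonormal [DecidableEq m] [DecidableEq r] {U : Matrix m r ℝ}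
    (hU : Uᵀ * U = 1) (Y : Matrix m n ℝ) : (Uᵀ * Y).frobSq ≤ Y.frobSq := by
  set K := 1 - U * Uᵀ
  have hK : Kᵀ * K = K := by
    simp only [K, transpose_sub, transpose_one, transpose_mul, transpose_transpose,
      Matrix.sub_mul, Matrix.mul_sub, Matrix.one_mul, Matrix.mul_one, Matrix.mul_assoc]
    rw [← Matrix.mul_assoc Uᵀ, hU, Matrix.one_mul, sub_self, sub_zero]
  have hsplit : Y.frobSq = (Uᵀ * Y).frobSq + (K * Y).frobSq := by
    rw [frobSq_eq_trace, frobSq_eq_trace, frobSq_eq_trace, transpose_mul, transpose_mul,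
      transpose_transpose, Matrix.mul_assoc Yᵀ Kᵀ, ← Matrix.mul_assoc Kᵀ, hK, ← trace_add]
    simp only [K, Matrix.sub_mul, Matrix.mul_sub, Matrix.one_mul, Matrix.mul_assoc]
    abel_nf
  linarith [frobSq_nonneg (K * Y)]

theorem frobSq_mul_le_of_orthonormal [DecidableEq m] [DecidableEq r] {U : Matrix m r ℝ}
    (hU : Uᵀ * U = 1) (Y : Matrix n m ℝ) : (Y * U).frobSq ≤ Y.frobSq := by
  rw [← frobSq_transpose, transpose_mul, ← frobSq_transpose Y]
  exact frobSq_transpose_mul_le_of_orthonormal hU Yᵀ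

theorem frobSq_diagonal [DecidableEq n] (d : n → ℝ) : (diagonal d).frobSq = ∑ i, d i ^ 2 := by
  simp [frobSq, diagonal_apply, ite_pow]

theorem frobSq_orthogonal_mul_diagonal_mul_transpose [DecidableEq n] {P : Matrix m n ℝ}
    {Q : Matrix l n ℝ} (hP : Pᵀ * P = 1) (hQ : Qᵀ * Q = 1) (d : n → ℝ) :
    (P * diagonal d * Qᵀ).frobSq = ∑ i, d i ^ 2 := by
  rw [frobSq_mul_transpose_eq_of_orthonormal hQ, frobSq_mul_eq_of_orthonormal hP,
    frobSq_diagonal]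

theorem frobSq_crossGram_sub_one_le [DecidableEq m] [DecidableEq r] {U : Matrix m r ℝ}
    (hU : Uᵀ * U = 1) (V : Matrix m l ℝ) :
    ((Uᵀ * V) * (Uᵀ * V)ᵀ - 1).frobSq ≤ (V * Vᵀ - U * Uᵀ).frobSq := by
  have hconj : Uᵀ * (V * Vᵀ - U * Uᵀ) * U = (Uᵀ * V) * (Uᵀ * V)ᵀ - 1 := by
    rw [Matrix.mul_sub, Matrix.sub_mul, transpose_mul, transpose_transpose]
    simp only [Matrix.mul_assoc]
    rw [← Matrix.mul_assoc Uᵀ U, hU, Matrix.one_mul]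
  rw [← hconj]
  exact (frobSq_mul_le_of_orthonormal hU _).trans (frobSq_transpose_mul_le_of_orthonormal hU _)

section

variable [DecidableEq n]

theorem exists_orthogonal_mul_diagonal_sqrt_of_transpose_mul_self_eq_diagonal
    {A : Matrix n n ℝ} {d : n → ℝ} (hA : Aᵀ * A = diagonal d) :
    ∃ P : Matrix n n ℝ, Pᵀ * P = 1 ∧ A = P * diagonal (fun j => √(d j)) := by
  let col : n → EuclideanSpace ℝ n := fun j => WithLp.toLp 2 (fun i => A i j)
  have hinner : ∀ i j, inner ℝ (col i) (col j) = (Aᵀ * A) i j := by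
    intro i j
    simp [col, PiLp.inner_apply, mul_apply, mul_comm]
  have horth : Pairwise fun i j => inner ℝ (col i) (col j) = 0 := by
    intro i j hij
    rw [hinner, hA, diagonal_apply_ne _ hij]
  have hnorm : ∀ j, ‖col j‖ = √(d j) := by
    intro j
    rw [norm_eq_sqrt_real_inner, hinner, hA, diagonal_apply_eq]
  -- The nonzero columns, normalised, extend to an orthonormal basis: the columns of `P`.
  have hunit :
      Orthonormal ℝ (Set.domRestrict {j | col j ≠ 0} fun j => ‖col j‖⁻¹ • col j) := by
    rw [orthonormal_iff_ite]
    rintro ⟨i, hi⟩ ⟨j, hj⟩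
    simp only [Set.domRestrict_apply, real_inner_smul_left, real_inner_smul_right, Subtype.mk.injEq]
    split_ifs with hij
    · subst hij
      rw [real_inner_self_eq_norm_sq]
      field_simp [norm_ne_zero_iff.mpr hi]
    · rw [horth hij, mul_zero, mul_zero]
  obtain ⟨b, hb⟩ := hunit.exists_orthonormalBasis_extension_of_card_eq
    (finrank_euclideanSpace (𝕜 := ℝ))
  have hcol : ∀ j, col j = ‖col j‖ • b j := by
    intro j
    by_cases hj : col j = 0
    · simp [hj]
    · rw [hb j hj, smul_smul, mul_inv_cancel₀ (norm_ne_zero_iff.mpr hj), one_smul]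
  refine ⟨(EuclideanSpace.basisFun n ℝ).toBasis.toMatrix b.toBasis, ?_, ?_⟩
  · simpa using (EuclideanSpace.basisFun n ℝ).toMatrix_orthonormalBasis_conjTranspose_mul_self b
  · ext i j
    have := congrArg (fun v : EuclideanSpace ℝ n => v i) (hcol j)
    simp only [col, hnorm] at this
    simp [mul_diagonal, Module.Basis.toMatrix_apply, this, mul_comm]

theorem exists_svd (M : Matrix n n ℝ) :
    ∃ (P Q : Matrix n n ℝ) (s : n → ℝ), Pᵀ * P = 1 ∧ Qᵀ * Q = 1 ∧ 0 ≤ s ∧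
      M = P * diagonal s * Qᵀ := by
  have hN : (Mᵀ * M).IsHermitian := by
    simpa using isHermitian_conjTranspose_mul_self M
  set Q : Matrix n n ℝ := (hN.eigenvectorUnitary : Matrix n n ℝ)
  have hQ : Qᵀ * Q = 1 := by
    have := Unitary.coe_star_mul_self hN.eigenvectorUnitary
    rwa [star_eq_conjTranspose, conjTranspose_eq_transpose_of_trivial] at this
  have hdiag : (M * Q)ᵀ * (M * Q) = diagonal hN.eigenvalues := by
    have := hN.conjStarAlgAut_star_eigenvectorUnitary
    rw [Unitary.conjStarAlgAut_star_apply, star_eq_conjTranspose,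
      conjTranspose_eq_transpose_of_trivial] at this
    simpa [Q, transpose_mul, Matrix.mul_assoc] using this
  obtain ⟨P, hP, hMQ⟩ :=
    exists_orthogonal_mul_diagonal_sqrt_of_transpose_mul_self_eq_diagonal hdiag
  refine ⟨P, Q, fun j => √(hN.eigenvalues j), hP, hQ, fun j => Real.sqrt_nonneg _, ?_⟩
  rw [← hMQ, Matrix.mul_assoc, mul_eq_one_comm.mp hQ, Matrix.mul_one]

theorem exists_orthogonal_frobSq_sub_le (M : Matrix n n ℝ) :
    ∃ O : Matrix n n ℝ, Oᵀ * O = 1 ∧ (M - O).frobSq ≤ (M * Mᵀ - 1).frobSq := by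
  obtain ⟨P, Q, s, hP, hQ, hs, rfl⟩ := exists_svd M
  have hPPt : P * Pᵀ = 1 := mul_eq_one_comm.mp hP
  have hQQt : Q * Qᵀ = 1 := mul_eq_one_comm.mp hQ
  refine ⟨P * Qᵀ, ?_, ?_⟩
  · rw [transpose_mul, transpose_transpose, Matrix.mul_assoc, ← Matrix.mul_assoc Pᵀ, hP,
      Matrix.one_mul, hQQt]
  have hsub : P * diagonal s * Qᵀ - P * Qᵀ = P * diagonal (fun i => s i - 1) * Qᵀ := by
    have hdiag : diagonal (fun i => s i - 1) = diagonal s - 1 := by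
      rw [← diagonal_one, diagonal_sub]
    rw [hdiag, Matrix.mul_sub, Matrix.sub_mul, Matrix.mul_one]
  have hgram : P * diagonal s * Qᵀ * (P * diagonal s * Qᵀ)ᵀ - 1
      = P * diagonal (fun i => s i ^ 2 - 1) * Pᵀ := by
    have hsq : diagonal (fun i => s i ^ 2 - 1) = diagonal s * diagonal s - 1 := by
      rw [diagonal_mul_diagonal, ← diagonal_one, diagonal_sub]
      simp only [sq]
    rw [hsq, Matrix.mul_sub, Matrix.sub_mul, Matrix.mul_one, hPPt, transpose_mul, transpose_mul,
      transpose_transpose, diagonal_transpose]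
    simp only [Matrix.mul_assoc]
    rw [← Matrix.mul_assoc Qᵀ Q, hQ, Matrix.one_mul]
  rw [hsub, hgram, frobSq_orthogonal_mul_diagonal_mul_transpose hP hQ,
    frobSq_orthogonal_mul_diagonal_mul_transpose hP hP]
  exact Finset.sum_le_sum fun i _ => sub_one_sq_le_sq_sub_one_sq (hs i)

end

end Matrix

theorem frob_eq_sqrt_frobSq {m n : ℕ} (A : Matrix (Fin m) (Fin n) ℝ) : frob A = √A.frobSq :=
  rfl

theorem crossGram_near_orthogonal_general {I R : ℕ}
    (U Ut : Matrix (Fin I) (Fin R) ℝ)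
    (hU : Uᵀ * U = 1) :
    frob ((Uᵀ * Ut) * (Uᵀ * Ut)ᵀ - 1) ≤ frob (Ut * Utᵀ - U * Uᵀ) ∧
    ∃ O : Matrix (Fin R) (Fin R) ℝ, Oᵀ * O = 1 ∧
      frob (Uᵀ * Ut - O) ≤ frob (Ut * Utᵀ - U * Uᵀ) := by
  simp only [frob_eq_sqrt_frobSq]
  have hgram := frobSq_crossGram_sub_one_le hU Ut
  obtain ⟨O, hO, hnear⟩ := exists_orthogonal_frobSq_sub_le (Uᵀ * Ut)
  exact ⟨Real.sqrt_le_sqrt hgram, O, hO, Real.sqrt_le_sqrt (hnear.trans hgram)⟩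

/-- Near-orthogonality of the cross-Gram matrix of two orthonormal frames, and
existence of a nearby orthogonal matrix. -/
theorem crossGram_near_orthogonal {I R : ℕ}
    (U Ut : Matrix (Fin I) (Fin R) ℝ)
    (hU : Uᵀ * U = 1) (hUt : Utᵀ * Ut = 1) :
    frob ((Uᵀ * Ut) * (Uᵀ * Ut)ᵀ - 1) ≤ frob (Ut * Utᵀ - U * Uᵀ) ∧
    ∃ O : Matrix (Fin R) (Fin R) ℝ, Oᵀ * O = 1 ∧
      frob (Uᵀ * Ut - O) ≤ frob (Ut * Utᵀ - U * Uᵀ) :=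
  crossGram_near_orthogonal_general U Ut hU
end
end
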